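/- The Gaussian moment identity holds: γ_0(z) := ∫_ℝ ∫_{|e_z| > √(2W(z)/m)} exp(−m(v_x² + e_z²)/(2kT)) |e_z| σ_z(z,e_z) de_z dv_x = (2kπT/m)·exp(−W(z)/(kT)), where σ_z(z,e_z) = (e_z² − (2/m)W(z))^{−1/2}. -/

import Mathlib

/-!
On each half-line the substitution `e = √(u² + c)` turns `|e| de / √(e² - c)` into `du`, so the
inner integral becomes `∫ exp (-b (vx² + u² + c)) du` over all of `ℝ`, with `b = m / (2kT)` and
`c = 2w/m`. The double integral then factors as `exp (-bc)` times two Gaussian integrals `√(π/b)`.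
-/

open MeasureTheory Set Real

section SqrtSubstitution

variable {c : ℝ}

lemma image_Ioi_sqrt_sq_add (hc : 0 ≤ c) :
    (fun u : ℝ => √(u ^ 2 + c)) '' Ioi 0 = Ioi √c := by
  ext y
  constructor
  · rintro ⟨u, hu : 0 < u, rfl⟩
    exact sqrt_lt_sqrt hc (by nlinarith)
  · intro (hy : √c < y)
    have hy0 : 0 < y := (sqrt_nonneg c).trans_lt hy
    have hcy : c < y ^ 2 := (sqrt_lt' hy0).mp hy
    refine ⟨√(y ^ 2 - c), sqrt_pos.mpr (by linarith), ?_⟩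
    simp only
    rw [sq_sqrt (by linarith), sub_add_cancel, sqrt_sq hy0.le]

lemma hasDerivAt_sqrt_sq_add (hc : 0 ≤ c) {u : ℝ} (hu : 0 < u) :
    HasDerivAt (fun u : ℝ => √(u ^ 2 + c)) (u / √(u ^ 2 + c)) u := by
  have hpos : 0 < u ^ 2 + c := by positivity
  convert ((hasDerivAt_pow 2 u).add_const c).sqrt hpos.ne' using 1
  field_simp
  push_cast
  ring

lemma injOn_sqrt_sq_add (hc : 0 ≤ c) : InjOn (fun u : ℝ => √(u ^ 2 + c)) (Ioi 0) := by
  intro u (hu : 0 < u) v (hv : 0 < v) h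
  rw [sqrt_inj (by positivity) (by positivity)] at h
  nlinarith

-- The substitution `e = √(u² + c)`, under which `e de = u du`.
lemma integral_Ioi_sqrt_mul_inv_sqrt_sub (hc : 0 ≤ c) (f : ℝ → ℝ) :
    ∫ e in Ioi √c, f (e ^ 2) * e * (√(e ^ 2 - c))⁻¹ = ∫ u in Ioi 0, f (u ^ 2 + c) := by
  rw [← image_Ioi_sqrt_sq_add hc, integral_image_eq_integral_abs_deriv_smul measurableSet_Ioi
    (fun u hu => (hasDerivAt_sqrt_sq_add hc hu).hasDerivWithinAt) (injOn_sqrt_sq_add hc)]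
  refine setIntegral_congr_fun measurableSet_Ioi fun u (hu : 0 < u) => ?_
  have hpos : 0 < √(u ^ 2 + c) := sqrt_pos.mpr (by positivity)
  rw [sq_sqrt (by positivity), add_sub_cancel_right, sqrt_sq hu.le, smul_eq_mul,
    abs_of_pos (div_pos hu hpos)]
  field_simp

lemma integral_sq_gt_mul_abs_inv_sqrt_sub (hc : 0 ≤ c) (f : ℝ → ℝ) :
    ∫ e in {e : ℝ | c < e ^ 2}, f (e ^ 2) * |e| * (√(e ^ 2 - c))⁻¹ = ∫ u, f (u ^ 2 + c) := by
  set g : ℝ → ℝ := fun e => f (e ^ 2) * e * (√(e ^ 2 - c))⁻¹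
  have hmeas : MeasurableSet {e : ℝ | c < e ^ 2} :=
    measurableSet_lt measurable_const (by fun_prop)
  have hind : ∀ e : ℝ,
      {e : ℝ | c < e ^ 2}.indicator (fun e => f (e ^ 2) * |e| * (√(e ^ 2 - c))⁻¹) e
        = (Ioi √c).indicator g |e| := by
    intro e
    have hmem : c < e ^ 2 ↔ √c < |e| := by rw [← sqrt_sq_eq_abs, sqrt_lt_sqrt_iff hc]
    simp only [indicator, mem_ofPred_eq, mem_Ioi, hmem, g, sq_abs]
  calc ∫ e in {e : ℝ | c < e ^ 2}, f (e ^ 2) * |e| * (√(e ^ 2 - c))⁻¹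
      = ∫ e, (Ioi √c).indicator g |e| := by
        rw [← integral_indicator hmeas]
        exact integral_congr_ae (Filter.Eventually.of_forall hind)
    _ = 2 * ∫ y in Ioi 0, (Ioi √c).indicator g y := integral_comp_abs
    _ = 2 * ∫ u in Ioi 0, f (u ^ 2 + c) := by
        rw [setIntegral_indicator measurableSet_Ioi, Ioi_inter_Ioi,
          sup_eq_right.mpr (sqrt_nonneg c), integral_Ioi_sqrt_mul_inv_sqrt_sub hc]
    _ = ∫ u, f (|u| ^ 2 + c) := integral_comp_abs.symm
    _ = ∫ u, f (u ^ 2 + c) := by simp_rw [sq_abs]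

end SqrtSubstitution

lemma integral_integral_exp_neg_mul_sq_add {b : ℝ} (hb : 0 ≤ b) (c : ℝ) :
    ∫ x, ∫ y, exp (-b * (x ^ 2 + (y ^ 2 + c))) = π / b * exp (-b * c) := by
  have hsplit : ∀ x y : ℝ,
      exp (-b * (x ^ 2 + (y ^ 2 + c))) = exp (-b * c) * exp (-b * x ^ 2) * exp (-b * y ^ 2) := by
    intro x y
    rw [← exp_add, ← exp_add]
    ring_nf
  simp only [hsplit, integral_const_mul, integral_mul_const, integral_gaussian]
  rw [mul_assoc, mul_self_sqrt (by positivity), mul_comm]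

/-- Gaussian moment identity:
`γ₀(z) = ∫_ℝ ∫_{e²>2W(z)/m} exp(−m(vx²+e²)/(2kT)) |e| (e²−(2/m)W(z))^{-1/2} de dvx
       = (2kπT/m)·exp(−W(z)/(kT))`, where `w = W(z) ≥ 0`. -/
theorem stmt2 (m k T w : ℝ) (hm : 0 < m) (hk : 0 < k) (hT : 0 < T) (hw : 0 ≤ w) :
    (∫ vx : ℝ, ∫ e in {e : ℝ | 2 / m * w < e ^ 2},
        Real.exp (-(m * (vx ^ 2 + e ^ 2)) / (2 * k * T)) * |e| *
          (Real.sqrt (e ^ 2 - 2 / m * w))⁻¹) =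
      2 * k * Real.pi * T / m * Real.exp (-(w / (k * T))) := by
  set b := m / (2 * k * T)
  set c := 2 / m * w
  have hexp : ∀ x s : ℝ, -(m * (x ^ 2 + s)) / (2 * k * T) = -b * (x ^ 2 + s) := fun x s => by ring
  have inner : ∀ x : ℝ,
      ∫ e in {e : ℝ | c < e ^ 2}, exp (-b * (x ^ 2 + e ^ 2)) * |e| * (√(e ^ 2 - c))⁻¹
        = ∫ u, exp (-b * (x ^ 2 + (u ^ 2 + c))) :=
    fun x => integral_sq_gt_mul_abs_inv_sqrt_sub (by positivity) fun s => exp (-b * (x ^ 2 + s))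
  simp_rw [hexp, inner, integral_integral_exp_neg_mul_sq_add (by positivity : 0 ≤ b)]
  have hπ : π / b = 2 * k * π * T / m := by simp only [b]; field_simp
  have hbc : -b * c = -(w / (k * T)) := by simp only [b, c]; field_simp
  rw [hπ, hbc]
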